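/- Let K ≥ 2, ℓ_k ∈ ℝ⁵ with |ℓ_k| < 1 and ℓ_k ≠ ℓ_m for k ≠ m, y_k^∞ ∈ ℝ⁵, and α ∈ (0,1). Then there exist C > 0 and T₁ ≥ 1 (depending on α and the parameters) such that for all t ≥ T₁ and every δ ∈ [0, α/4]: ∫_{ℝ⁵} ρ(t,x) q(t,x)^{6−2δ} dx ≤ C t. -/

import Mathlib

noncomputable section

open Real Filter MeasureTheory Set Classical
open scoped BigOperators Topology

abbrev E5 := EuclideanSpace ℝ (Fin 5)

/-- `L̄ = max_k |ℓ_k|`. -/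
def Lbar {K : ℕ} (l : Fin K → E5) : ℝ := sSup {r : ℝ | ∃ k, r = ‖l k‖}

/-- `σ = (1/100) min({1 - L̄} ∪ {|ℓ_k - ℓ_m| : k ≠ m})`. -/
def sigP {K : ℕ} (l : Fin K → E5) : ℝ :=
  (1 / 100 : ℝ) * sInf ({1 - Lbar l} ∪ {r : ℝ | ∃ k m, k ≠ m ∧ r = ‖l k - l m‖})

/-- `L = 1 - σ`. -/
def LL {K : ℕ} (l : Fin K → E5) : ℝ := 1 - sigP l

/-- The weight `Θ`. -/
def Theta (L α t : ℝ) (x : E5) : ℝ :=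
  if ‖x‖ < L * t then 1 else (L * t / ‖x‖) ^ α

/-- The weight `ρ`. -/
def rho (L α t : ℝ) (x : E5) : ℝ :=
  if ‖x‖ < L * t then t else t ^ α * (‖x‖ / L) ^ (1 - α)

/-- `q_k(t,x) = (1 + |x - ℓ_k t - y_k^∞|²)^{-1/2}`. -/
def qk {K : ℕ} (l : Fin K → E5) (yI : Fin K → E5) (k : Fin K) (t : ℝ) (x : E5) : ℝ :=
  (1 + ‖x - t • l k - yI k‖ ^ 2) ^ (-(1 : ℝ) / 2)

/-- `q = Σ_k q_k`. -/
def qsum {K : ℕ} (l : Fin K → E5) (yI : Fin K → E5) (t : ℝ) (x : E5) : ℝ :=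
  ∑ k, qk l yI k t x

lemma my_rpow_add_le {a b p : ℝ} (ha : 0 ≤ a) (hb : 0 ≤ b) (hp : 0 ≤ p) (hp1 : p ≤ 1) :
    (a + b) ^ p ≤ a ^ p + b ^ p := by
  have h := NNReal.rpow_add_le_add_rpow (⟨a, ha⟩ : NNReal) ⟨b, hb⟩ hp hp1
  have h2 := NNReal.coe_le_coe.2 h
  push_cast [NNReal.coe_rpow] at h2
  exact h2

lemma my_integrable_aux (s p : ℝ) (hs : 0 ≤ s) (hp : 5 + s < 2 * p) :
    Integrable (fun y : E5 => ‖y‖ ^ s * (1 + ‖y‖ ^ 2) ^ (-p)) := by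
  have hp0 : 0 < p := by linarith
  have h5 : (Module.finrank ℝ E5 : ℝ) < 2 * p - s := by
    simp [finrank_euclideanSpace_fin]; linarith
  have hbase : Integrable (fun y : E5 => (2:ℝ) ^ p * (1 + ‖y‖) ^ (-(2 * p - s))) :=
    (integrable_one_add_norm h5).const_mul _
  refine hbase.mono' ?_ ?_
  · apply Continuous.aestronglyMeasurable
    apply Continuous.mul
    · exact continuous_norm.rpow_const (fun x => Or.inr hs)
    · apply Continuous.rpow_const
      · exact continuous_const.add ((continuous_norm).pow 2)
      · intro x; left; positivity
  · refine Filter.Eventually.of_forall (fun y => ?_)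
    have hy : (0:ℝ) ≤ ‖y‖ := norm_nonneg y
    have h1y : (0:ℝ) < 1 + ‖y‖ := by linarith
    rw [Real.norm_of_nonneg (by positivity)]
    have hA : ‖y‖ ^ s ≤ (1 + ‖y‖) ^ s := Real.rpow_le_rpow hy (by linarith) hs
    have hB : (1 + ‖y‖ ^ 2) ^ (-p) ≤ (2:ℝ) ^ p * (1 + ‖y‖) ^ (-(2 * p)) := by
      have hineq : ((1 + ‖y‖) ^ 2) / 2 ≤ 1 + ‖y‖ ^ 2 := by nlinarith [sq_nonneg (1 - ‖y‖)]
      have hpos : (0:ℝ) < ((1 + ‖y‖) ^ 2) / 2 := by positivity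
      have := Real.rpow_le_rpow_of_nonpos hpos hineq (neg_nonpos.2 hp0.le)
      refine le_trans this (le_of_eq ?_)
      rw [Real.div_rpow (by positivity) (by norm_num : (0:ℝ) ≤ 2),
        ← Real.rpow_natCast (1 + ‖y‖) 2, ← Real.rpow_mul h1y.le,
        Real.rpow_neg (by norm_num : (0:ℝ) ≤ 2), div_inv_eq_mul,
        show ((2:ℕ):ℝ) * -p = -(2*p) by push_cast; ring]
      ring
    calc ‖y‖ ^ s * (1 + ‖y‖ ^ 2) ^ (-p)
        ≤ (1 + ‖y‖) ^ s * ((2:ℝ) ^ p * (1 + ‖y‖) ^ (-(2*p))) := by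
          apply mul_le_mul hA hB (by positivity) (by positivity)
      _ = (2:ℝ) ^ p * (1 + ‖y‖) ^ (-(2 * p - s)) := by
          rw [mul_left_comm, ← Real.rpow_add h1y, show s + -(2*p) = -(2*p - s) by ring]

set_option maxHeartbeats 1000000 in
/-- The weighted integral bound `∫ ρ q^{6-2δ} ≤ C t` (estimates (2.14)-(2.15)). -/
theorem rho_q_integral_bound
    (K : ℕ) (hK : 2 ≤ K)
    (l : Fin K → E5) (hl : ∀ k, ‖l k‖ < 1)
    (hll : ∀ k m, k ≠ m → l k ≠ l m)
    (yI : Fin K → E5) (α : ℝ) (hα : α ∈ Set.Ioo (0 : ℝ) 1) :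
    ∃ C > (0 : ℝ), ∃ T₁ ≥ (1 : ℝ), ∀ t ≥ T₁, ∀ δ ∈ Set.Icc (0 : ℝ) (α / 4),
      (∫ x : E5, rho (LL l) α t x * qsum l yI t x ^ (6 - 2 * δ)) ≤ C * t := by
  obtain ⟨hα0, hα1⟩ := hα
  haveI hFK : Nonempty (Fin K) := ⟨⟨0, by omega⟩⟩
  set L := LL l with hLdef
  -- L is bounded below
  have hLbar_le : Lbar l ≤ 1 := Real.sSup_le (by rintro r ⟨k, rfl⟩; exact (hl k).le) one_pos.le
  have hLbar_nonneg : 0 ≤ Lbar l := by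
    have hbdd : BddAbove {r : ℝ | ∃ k, r = ‖l k‖} := by
      have : {r : ℝ | ∃ k, r = ‖l k‖} = Set.range fun k => ‖l k‖ := by
        ext r; simp [eq_comm]
      rw [this]; exact (Set.finite_range _).bddAbove
    exact le_trans (norm_nonneg (l (Classical.arbitrary _)))
      (le_csSup hbdd ⟨Classical.arbitrary _, rfl⟩)
  have hsig : sigP l ≤ 1 / 100 := by
    have hbdd : BddBelow ({1 - Lbar l} ∪ {r : ℝ | ∃ k m, k ≠ m ∧ r = ‖l k - l m‖}) := by
      refine ⟨0, ?_⟩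
      rintro r (hr | ⟨k, m, -, rfl⟩)
      · simp only [Set.mem_singleton_iff] at hr; subst hr; linarith
      · exact norm_nonneg _
    have hmem : (1 - Lbar l) ∈ ({1 - Lbar l} ∪ {r : ℝ | ∃ k m, k ≠ m ∧ r = ‖l k - l m‖}) :=
      Or.inl rfl
    have := csInf_le hbdd hmem
    rw [sigP]
    nlinarith
  have hL0 : (0:ℝ) < L := by rw [hLdef, LL]; linarith
  -- constants
  set Y : ℝ := ∑ k, ‖yI k‖ with hYdef
  have hY : 0 ≤ Y := Finset.sum_nonneg fun k _ => norm_nonneg _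
  set B : ℝ := (1 + Y) ^ (1 - α) with hBdef
  have hB : 0 ≤ B := Real.rpow_nonneg (by linarith) _
  set E : ℝ := L ^ (α - 1) with hEdef
  have hE : 0 ≤ E := Real.rpow_nonneg hL0.le _
  set c₁ : ℝ := (K:ℝ) ^ (6:ℝ) * (1 + E * B) with hc₁def
  set c₂ : ℝ := (K:ℝ) ^ (6:ℝ) * E with hc₂def
  have hK1 : (1:ℝ) ≤ (K:ℝ) := by exact_mod_cast Nat.one_le_of_lt hK
  have hc₁ : 0 ≤ c₁ := by
    apply mul_nonneg (Real.rpow_nonneg (by positivity) _); nlinarith [mul_nonneg hE hB]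
  have hc₂ : 0 ≤ c₂ := mul_nonneg (Real.rpow_nonneg (by positivity) _) hE
  set g : E5 → ℝ := fun y =>
    c₁ * (1 + ‖y‖ ^ 2) ^ (-(3 - α / 4)) + c₂ * (‖y‖ ^ (1 - α) * (1 + ‖y‖ ^ 2) ^ (-(3 - α / 4)))
    with hgdef
  have hg_nonneg : ∀ y, 0 ≤ g y := by
    intro y; rw [hgdef]
    have h1 : (0:ℝ) ≤ (1 + ‖y‖ ^ 2) ^ (-(3 - α / 4)) := Real.rpow_nonneg (by positivity) _
    have h2 : (0:ℝ) ≤ ‖y‖ ^ (1 - α) := Real.rpow_nonneg (norm_nonneg _) _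
    positivity
  have hg_int : Integrable g := by
    rw [hgdef]
    apply Integrable.add
    · have h := (my_integrable_aux 0 (3 - α / 4) le_rfl (by linarith)).const_mul c₁
      simpa [Real.rpow_zero] using h
    · exact (my_integrable_aux (1 - α) (3 - α / 4) (by linarith) (by linarith)).const_mul c₂
  have hintg : 0 ≤ ∫ y : E5, g y := integral_nonneg hg_nonneg
  refine ⟨(K:ℝ) * (∫ y : E5, g y) + 1, by nlinarith, 1, le_refl 1, ?_⟩
  intro t ht δ hδ
  obtain ⟨hδ0, hδα⟩ := hδ
  have ht0 : (0:ℝ) < t := lt_of_lt_of_le one_pos ht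
  set p : ℝ := 6 - 2 * δ with hpdef
  -- centers
  set c : Fin K → E5 := fun k => t • l k + yI k with hcdef
  have hnc : ∀ k, ‖c k‖ ≤ (1 + Y) * t := by
    intro k
    have h1 : ‖c k‖ ≤ ‖t • l k‖ + ‖yI k‖ := norm_add_le _ _
    have h2 : ‖t • l k‖ = t * ‖l k‖ := by
      rw [norm_smul, Real.norm_of_nonneg ht0.le]
    have h3 : ‖yI k‖ ≤ Y := Finset.single_le_sum (fun k _ => norm_nonneg (yI k))
      (Finset.mem_univ k)
    have h4 : t * ‖l k‖ ≤ t := by nlinarith [hl k, norm_nonneg (l k)]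
    nlinarith
  -- pointwise bound
  have hpoint : ∀ x : E5, rho L α t x * qsum l yI t x ^ p ≤ t * ∑ k, g (x - c k) := by
    intro x
    obtain ⟨j, -, hj⟩ := Finset.exists_max_image Finset.univ
      (fun k => qk l yI k t x) Finset.univ_nonempty
    have hsub : ∀ k, x - t • l k - yI k = x - c k := by
      intro k; rw [hcdef]; simp; abel
    have hqk_nonneg : ∀ k, 0 ≤ qk l yI k t x := fun k =>
      Real.rpow_nonneg (by positivity) _
    have hq_nonneg : 0 ≤ qsum l yI t x := Finset.sum_nonneg fun k _ => hqk_nonneg k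
    have hq_le : qsum l yI t x ≤ (K:ℝ) * qk l yI j t x := by
      rw [qsum]
      calc ∑ k, qk l yI k t x ≤ ∑ _k : Fin K, qk l yI j t x :=
            Finset.sum_le_sum fun k _ => hj k (Finset.mem_univ k)
        _ = (K:ℝ) * qk l yI j t x := by
            rw [Finset.sum_const, Finset.card_univ, Fintype.card_fin, nsmul_eq_mul]
    -- q^p bound
    have hbase1 : (1:ℝ) ≤ 1 + ‖x - c j‖ ^ 2 := le_add_of_nonneg_right (sq_nonneg _)
    have hqj : qk l yI j t x ^ p ≤ (1 + ‖x - c j‖ ^ 2) ^ (-(3 - α / 4)) := by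
      rw [qk, hsub j, ← Real.rpow_mul (by positivity)]
      apply Real.rpow_le_rpow_of_exponent_le hbase1
      rw [hpdef]; linarith
    have hqp : qsum l yI t x ^ p ≤ (K:ℝ) ^ (6:ℝ) * (1 + ‖x - c j‖ ^ 2) ^ (-(3 - α / 4)) := by
      calc qsum l yI t x ^ p ≤ ((K:ℝ) * qk l yI j t x) ^ p :=
            Real.rpow_le_rpow hq_nonneg hq_le (by rw [hpdef]; linarith)
        _ = (K:ℝ) ^ p * qk l yI j t x ^ p :=
            Real.mul_rpow (by positivity) (hqk_nonneg j)
        _ ≤ (K:ℝ) ^ (6:ℝ) * (1 + ‖x - c j‖ ^ 2) ^ (-(3 - α / 4)) := by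
            apply mul_le_mul (Real.rpow_le_rpow_of_exponent_le hK1 (by rw [hpdef]; linarith))
              hqj (Real.rpow_nonneg (hqk_nonneg j) p) (Real.rpow_nonneg (by positivity) _)
    -- rho bound
    set a : ℝ := ‖x - c j‖ ^ (1 - α) with hadef
    have ha0 : 0 ≤ a := Real.rpow_nonneg (norm_nonneg _) _
    have hrho : rho L α t x ≤ t * (1 + E * (a + B)) := by
      rw [rho]
      split_ifs with h
      · nlinarith [mul_nonneg hE (add_nonneg ha0 hB)]
      · have hxn : (0:ℝ) ≤ ‖x‖ := norm_nonneg x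
        have h1 : (‖x‖ / L) ^ (1 - α) = ‖x‖ ^ (1 - α) * E := by
          rw [Real.div_rpow hxn hL0.le, div_eq_mul_inv, ← Real.rpow_neg hL0.le, hEdef,
            neg_sub]
        have h2 : ‖x‖ ^ (1 - α) ≤ a + B * t ^ (1 - α) := by
          have hx1 : ‖x‖ ≤ ‖x - c j‖ + ‖c j‖ := by
            calc ‖x‖ = ‖x - c j + c j‖ := by rw [sub_add_cancel]
              _ ≤ ‖x - c j‖ + ‖c j‖ := norm_add_le _ _
          calc ‖x‖ ^ (1 - α) ≤ (‖x - c j‖ + ‖c j‖) ^ (1 - α) :=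
                Real.rpow_le_rpow hxn hx1 (by linarith)
            _ ≤ a + ‖c j‖ ^ (1 - α) :=
                my_rpow_add_le (norm_nonneg _) (norm_nonneg _) (by linarith) (by linarith)
            _ ≤ a + B * t ^ (1 - α) := by
                have := Real.rpow_le_rpow (norm_nonneg (c j)) (hnc j)
                  (by linarith : (0:ℝ) ≤ 1 - α)
                rw [Real.mul_rpow (by linarith) ht0.le] at this
                linarith
        have h4 : t ^ α * t ^ (1 - α) = t := by
          rw [← Real.rpow_add ht0, show α + (1 - α) = 1 by ring, Real.rpow_one]
        have h5 : t ^ α ≤ t := by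
          calc t ^ α ≤ t ^ (1:ℝ) := Real.rpow_le_rpow_of_exponent_le ht hα1.le
            _ = t := Real.rpow_one t
        have htα : (0:ℝ) ≤ t ^ α := Real.rpow_nonneg ht0.le _
        calc t ^ α * (‖x‖ / L) ^ (1 - α) = (t ^ α * ‖x‖ ^ (1 - α)) * E := by
              rw [h1]; ring
          _ ≤ (t ^ α * (a + B * t ^ (1 - α))) * E := by
              apply mul_le_mul_of_nonneg_right _ hE
              exact mul_le_mul_of_nonneg_left h2 htα
          _ = (t ^ α * a + B * (t ^ α * t ^ (1 - α))) * E := by ring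
          _ = (t ^ α * a + B * t) * E := by rw [h4]
          _ ≤ (t * a + B * t) * E := by
              apply mul_le_mul_of_nonneg_right _ hE
              have := mul_le_mul_of_nonneg_right h5 ha0
              linarith
          _ = t * (E * (a + B)) := by ring
          _ ≤ t * (1 + E * (a + B)) := by
              apply mul_le_mul_of_nonneg_left _ ht0.le
              linarith
    -- combine
    have hrho_nonneg : 0 ≤ rho L α t x := by
      rw [rho]; split_ifs
      · exact ht0.le
      · exact mul_nonneg (Real.rpow_nonneg ht0.le _) (Real.rpow_nonneg (by positivity) _)
    have hcomb : rho L α t x * qsum l yI t x ^ p ≤ t * g (x - c j) := by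
      calc rho L α t x * qsum l yI t x ^ p
          ≤ (t * (1 + E * (a + B))) * ((K:ℝ) ^ (6:ℝ) * (1 + ‖x - c j‖ ^ 2) ^ (-(3 - α / 4))) :=
            mul_le_mul hrho hqp (Real.rpow_nonneg hq_nonneg p)
              (by nlinarith [mul_nonneg hE (add_nonneg ha0 hB)])
        _ = t * g (x - c j) := by
            simp only [hgdef, hc₁def, hc₂def, hadef]
            ring
    refine le_trans hcomb ?_
    apply mul_le_mul_of_nonneg_left _ ht0.le
    exact Finset.single_le_sum (fun k _ => hg_nonneg (x - c k)) (Finset.mem_univ j)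
  -- integration
  have hgk_int : ∀ k : Fin K, Integrable (fun x : E5 => g (x - c k)) := fun k =>
    hg_int.comp_sub_right (c k)
  have hG_int : Integrable (fun x : E5 => t * ∑ k, g (x - c k)) :=
    (integrable_finset_sum _ fun k _ => hgk_int k).const_mul t
  have hnn : ∀ x : E5, 0 ≤ rho L α t x * qsum l yI t x ^ p := by
    intro x
    apply mul_nonneg
    · rw [rho]; split_ifs
      · exact ht0.le
      · exact mul_nonneg (Real.rpow_nonneg ht0.le _) (Real.rpow_nonneg (by positivity) _)
    · exact Real.rpow_nonneg (Finset.sum_nonneg fun k _ =>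
        Real.rpow_nonneg (by positivity) _) _
  calc (∫ x : E5, rho L α t x * qsum l yI t x ^ p)
      ≤ ∫ x : E5, t * ∑ k, g (x - c k) :=
        integral_mono_of_nonneg (Filter.Eventually.of_forall hnn) hG_int
          (Filter.Eventually.of_forall hpoint)
    _ = t * ∫ x : E5, ∑ k, g (x - c k) := integral_const_mul t _
    _ = t * ∑ k : Fin K, ∫ x : E5, g (x - c k) := by
        rw [integral_finset_sum _ fun k _ => hgk_int k]
    _ = t * ((K:ℝ) * ∫ y : E5, g y) := by
        have : ∀ k : Fin K, (∫ x : E5, g (x - c k)) = ∫ y : E5, g y := fun k =>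
          integral_sub_right_eq_self g (c k)
        rw [Finset.sum_congr rfl fun k _ => this k, Finset.sum_const, Finset.card_univ,
          Fintype.card_fin, nsmul_eq_mul]
    _ ≤ ((K:ℝ) * (∫ y : E5, g y) + 1) * t := by nlinarith
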